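/- Let X be a connected compact plane set such that the normed algebra D¹(X) with norm ‖f‖ = |f|_X + |f'|_X is complete, and suppose f ∈ D¹(X) satisfies f' = 0 on X. Then f is constant. -/

import Mathlib

/-!
Functions whose derivative vanishes on `X` form a subspace `Z` of `C(X, ℂ)` on which the
`D¹`-norm is the uniform norm, so completeness of `D¹(X)` makes `Z` a Banach space. Each
`h ∈ Z` is differentiable at `z`, so the difference quotients `(h w - h z) / (w - z)` are
pointwise bounded on `Z`, and Banach–Steinhaus gives `‖h w - h z‖ ≤ A ‖h‖ ‖w - z‖` uniformly
in `h`. Since `Z` is stable under post-composition with Lipschitz maps, truncating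
`‖f - f z‖ / ‖f w - f z‖` at `1` yields `h ∈ Z` with `‖h‖ ≤ 1` and `‖h w - h z‖ = 1`; this
forbids points `w` with `f w ≠ f z` arbitrarily close to `z`. So `f` is locally constant on
the connected set `X`, hence constant.
-/

open Complex Set

/-- The uniform norm of `f` on `X`. -/
noncomputable def UnifNorm (X : Set ℂ) (f : ℂ → ℂ) : ℝ :=
  sSup ((fun z => ‖f z‖) '' X)

/-- `f` is continuously differentiable on `X` with derivative `f'`
(derivative taken as a limit within `X`). -/
def HasD1 (X : Set ℂ) (f f' : ℂ → ℂ) : Prop :=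
  (∀ z ∈ X, HasDerivWithinAt f (f' z) X z) ∧ ContinuousOn f' X

/-- The `D¹`-norm `|f|_X + |f'|_X`. -/
noncomputable def DNorm (X : Set ℂ) (f f' : ℂ → ℂ) : ℝ :=
  UnifNorm X f + UnifNorm X f'

/-- The normed algebra `(D¹(X), ‖·‖)` is complete: every Cauchy sequence in `D¹(X)`
converges in the norm to an element of `D¹(X)`. -/
def D1Complete (X : Set ℂ) : Prop :=
  ∀ f g : ℕ → ℂ → ℂ, (∀ n, HasD1 X (f n) (g n)) →
    (∀ ε > (0:ℝ), ∃ N, ∀ m ≥ N, ∀ n ≥ N,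
      DNorm X (fun z => f m z - f n z) (fun z => g m z - g n z) < ε) →
    ∃ f₀ g₀ : ℂ → ℂ, HasD1 X f₀ g₀ ∧
      Filter.Tendsto (fun n => DNorm X (fun z => f n z - f₀ z) (fun z => g n z - g₀ z))
        Filter.atTop (nhds 0)

open Filter Topology

theorem IsPreconnected.apply_eq_of_eventually_eq {α β : Type*} [TopologicalSpace α] {s : Set α}
    (hs : IsPreconnected s) {f : α → β} (hf : ∀ x ∈ s, ∀ᶠ y in 𝓝[s] x, f y = f x) :
    ∀ x ∈ s, ∀ y ∈ s, f x = f y := by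
  have := isPreconnected_iff_preconnectedSpace.mp hs
  have hloc : IsLocallyConstant (s.domRestrict f) := by
    refine (IsLocallyConstant.iff_eventually_eq _).2 fun x => ?_
    have := hf x x.2
    rwa [← map_nhds_subtype_val, eventually_map] at this
  exact fun x hx y hy => hloc.apply_eq_of_preconnectedSpace ⟨x, hx⟩ ⟨y, hy⟩

theorem LipschitzWith.comp_hasDerivWithinAt_zero {𝕜 E F : Type*} [NontriviallyNormedField 𝕜]
    [NormedAddCommGroup E] [NormedSpace 𝕜 E] [NormedAddCommGroup F] [NormedSpace 𝕜 F]
    {φ : E → F} {K : NNReal} (hφ : LipschitzWith K φ) {g : 𝕜 → E} {s : Set 𝕜} {x : 𝕜}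
    (hg : HasDerivWithinAt g 0 s x) : HasDerivWithinAt (φ ∘ g) 0 s x := by
  rw [hasDerivWithinAt_iff_isLittleO] at hg ⊢
  simp only [smul_zero, sub_zero] at hg ⊢
  refine Asymptotics.IsBigO.trans_isLittleO (Asymptotics.IsBigO.of_bound K ?_) hg
  exact Eventually.of_forall fun y => hφ.norm_sub_le _ _

theorem HasDerivWithinAt.exists_norm_slope_le {𝕜 E : Type*} [NontriviallyNormedField 𝕜]
    [NormedAddCommGroup E] [NormedSpace 𝕜 E] {g : 𝕜 → E} {g' : E} {s : Set 𝕜} {x : 𝕜}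
    (hg : HasDerivWithinAt g g' s x) (hx : x ∈ s) {M : ℝ} (hM : ∀ y ∈ s, ‖g y‖ ≤ M) :
    ∃ C, ∀ y ∈ s, ‖slope g x y‖ ≤ C := by
  have hnear : ∀ᶠ y in 𝓝[s \ {x}] x, ‖slope g x y‖ < ‖g'‖ + 1 :=
    (hasDerivWithinAt_iff_tendsto_slope.1 hg).norm.eventually (gt_mem_nhds (lt_add_one _))
  obtain ⟨δ, hδ, hδs⟩ := Metric.mem_nhdsWithin_iff.1 hnear
  refine ⟨max (‖g'‖ + 1) (2 * M / δ), fun y hy => ?_⟩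
  rcases eq_or_ne y x with rfl | hyx
  · simp only [slope_same, norm_zero]; positivity
  by_cases hyδ : dist y x < δ
  · exact le_max_of_le_left (hδs ⟨hyδ, hy, hyx⟩).le
  refine le_max_of_le_right ?_
  have hdist : δ ≤ ‖y - x‖ := by rw [← dist_eq_norm]; exact not_lt.1 hyδ
  rw [slope_def_module, norm_smul, norm_inv]
  calc ‖y - x‖⁻¹ * ‖g y - g x‖ ≤ δ⁻¹ * (2 * M) := by
        gcongr
        linarith [norm_sub_le (g y) (g x), hM y hy, hM x hx]
    _ = 2 * M / δ := by ring

section UnifNorm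

variable {X : Set ℂ} {f : ℂ → ℂ}

theorem unifNorm_nonneg : 0 ≤ UnifNorm X f :=
  Real.sSup_nonneg (by rintro _ ⟨z, _, rfl⟩; exact norm_nonneg _)

theorem unifNorm_le {B : ℝ} (hB : 0 ≤ B) (h : ∀ z ∈ X, ‖f z‖ ≤ B) : UnifNorm X f ≤ B :=
  Real.sSup_le (by rintro _ ⟨z, hz, rfl⟩; exact h z hz) hB

theorem norm_le_unifNorm (hX : IsCompact X) (hf : ContinuousOn f X) {z : ℂ} (hz : z ∈ X) :
    ‖f z‖ ≤ UnifNorm X f :=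
  le_csSup (hX.image_of_continuousOn hf.norm).bddAbove (mem_image_of_mem _ hz)

end UnifNorm

theorem HasD1.continuousOn {X : Set ℂ} {f f' : ℂ → ℂ} (hf : HasD1 X f f') : ContinuousOn f X :=
  fun z hz => (hf.1 z hz).continuousWithinAt

theorem tendsto_apply_of_tendsto_dNorm {X : Set ℂ} (hX : IsCompact X) {F G : ℕ → ℂ → ℂ}
    {f g : ℂ → ℂ} (hFG : ∀ n, HasD1 X (F n) (G n)) (hfg : HasD1 X f g)
    (hlim : Tendsto (fun n => DNorm X (fun z => F n z - f z) (fun z => G n z - g z)) atTop (𝓝 0))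
    {z : ℂ} (hz : z ∈ X) :
    Tendsto (fun n => F n z) atTop (𝓝 (f z)) ∧ Tendsto (fun n => G n z) atTop (𝓝 (g z)) := by
  constructor <;> refine tendsto_iff_norm_sub_tendsto_zero.2
    (squeeze_zero (fun _ => norm_nonneg _) (fun n => ?_) hlim)
  · have := norm_le_unifNorm (f := fun z => F n z - f z) hX
      ((hFG n).continuousOn.sub hfg.continuousOn) hz
    have : 0 ≤ UnifNorm X (fun z => G n z - g z) := unifNorm_nonneg
    unfold DNorm; linarith
  · have := norm_le_unifNorm (f := fun z => G n z - g z) hX ((hFG n).2.sub hfg.2) hz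
    have : 0 ≤ UnifNorm X (fun z => F n z - f z) := unifNorm_nonneg
    unfold DNorm; linarith

def zeroDerivSubmodule (X : Set ℂ) : Submodule ℂ C(X, ℂ) where
  carrier := {h | ∃ F : ℂ → ℂ, (∀ x : X, F x = h x) ∧ ∀ z ∈ X, HasDerivWithinAt F 0 X z}
  add_mem' := by
    rintro h k ⟨F, hFh, hF⟩ ⟨G, hGk, hG⟩
    exact ⟨F + G, fun x => by simp [hFh, hGk], fun z hz => by simpa using (hF z hz).add (hG z hz)⟩
  zero_mem' := ⟨0, fun _ => rfl, fun _ _ => hasDerivWithinAt_const _ _ _⟩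
  smul_mem' := by
    rintro c h ⟨F, hFh, hF⟩
    exact ⟨c • F, fun x => by simp [hFh], fun z hz => by simpa using (hF z hz).const_smul c⟩

theorem isClosed_zeroDerivSubmodule {X : Set ℂ} [CompactSpace X] (hcomp : D1Complete X) :
    IsClosed (zeroDerivSubmodule X : Set C(X, ℂ)) := by
  have hX : IsCompact X := isCompact_iff_compactSpace.2 ‹_›
  refine isClosed_of_closure_subset fun h hh => ?_
  obtain ⟨u, hu, hlim⟩ := mem_closure_iff_seq_limit.1 hh
  choose F hFu hF using hu
  have hFD1 : ∀ n, HasD1 X (F n) (fun _ => 0) := fun n => ⟨hF n, continuousOn_const⟩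
  have hcauchy : ∀ ε > (0 : ℝ), ∃ N, ∀ m ≥ N, ∀ n ≥ N,
      DNorm X (fun z => F m z - F n z) (fun _ => (0 : ℂ) - 0) < ε := by
    intro ε hε
    obtain ⟨N, hN⟩ := Metric.cauchySeq_iff.1 hlim.cauchySeq ε hε
    refine ⟨N, fun m hm n hn => lt_of_le_of_lt ?_ (hN m hm n hn)⟩
    have hF0 : UnifNorm X (fun _ => (0 : ℂ) - 0) ≤ 0 := unifNorm_le le_rfl (by simp)
    have hFmn : UnifNorm X (fun z => F m z - F n z) ≤ dist (u m) (u n) := by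
      refine unifNorm_le dist_nonneg fun z hz => ?_
      have := (u m - u n).norm_coe_le_norm ⟨z, hz⟩
      rwa [ContinuousMap.sub_apply, ← hFu, ← hFu, ← dist_eq_norm (u m)] at this
    unfold DNorm; linarith
  obtain ⟨f, g, hfg, hflim⟩ := hcomp F (fun _ _ => 0) hFD1 hcauchy
  have hlim_apply (x : X) := tendsto_apply_of_tendsto_dNorm hX hFD1 hfg hflim x.2
  refine ⟨f, fun x => tendsto_nhds_unique (hlim_apply x).1 ?_, fun z hz => ?_⟩
  · simp only [hFu]
    exact ((continuous_eval_const x).tendsto h).comp hlim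
  · have hg : g z = 0 := tendsto_nhds_unique (hlim_apply ⟨z, hz⟩).2 tendsto_const_nhds
    exact hg ▸ hfg.1 z hz

theorem exists_norm_sub_le_of_mem_zeroDerivSubmodule {X : Set ℂ} [CompactSpace X]
    (hcomp : D1Complete X) (z : X) :
    ∃ A, ∀ h ∈ zeroDerivSubmodule X, ∀ w : X, ‖h w - h z‖ ≤ A * ‖h‖ * ‖(w : ℂ) - z‖ := by
  have : CompleteSpace (zeroDerivSubmodule X) :=
    (isClosed_zeroDerivSubmodule hcomp).completeSpace_coe
  let slopeCLM (w : X) : zeroDerivSubmodule X →L[ℂ] ℂ := ((w : ℂ) - z)⁻¹ •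
    (ContinuousMap.evalCLM ℂ w - ContinuousMap.evalCLM ℂ z : C(X, ℂ) →L[ℂ] ℂ).comp
      (zeroDerivSubmodule X).subtypeL
  have hslope (h : zeroDerivSubmodule X) (w : X) :
      ‖slopeCLM w h‖ = ‖(w : ℂ) - z‖⁻¹ * ‖(h : C(X, ℂ)) w - (h : C(X, ℂ)) z‖ := by
    simp only [slopeCLM, smul_apply, ContinuousLinearMap.comp_apply,
      sub_apply, ContinuousMap.evalCLM_apply, Submodule.subtypeL_apply,
      norm_smul, norm_inv]
  obtain ⟨A, hA⟩ := banach_steinhaus (g := slopeCLM) fun h => by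
    obtain ⟨F, hFh, hF⟩ := h.2
    obtain ⟨C, hC⟩ := (hF z z.2).exists_norm_slope_le z.2 (M := ‖(h : C(X, ℂ))‖)
      fun y hy => hFh ⟨y, hy⟩ ▸ (h : C(X, ℂ)).norm_coe_le_norm ⟨y, hy⟩
    refine ⟨C, fun w => ?_⟩
    have := hC w w.2
    rwa [slope_def_module, norm_smul, norm_inv, hFh, hFh, ← hslope] at this
  refine ⟨A, fun h hh w => ?_⟩
  rcases eq_or_ne (w : ℂ) z with hwz | hwz
  · simp only [Subtype.ext hwz, sub_self, norm_zero, mul_zero, le_refl]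
  have hbound := ((slopeCLM w).le_opNorm ⟨h, hh⟩).trans
    (mul_le_mul_of_nonneg_right (hA w) (norm_nonneg _))
  rw [hslope, inv_mul_le_iff₀ (norm_pos_iff.2 (sub_ne_zero.2 hwz)), Submodule.coe_norm] at hbound
  linarith

theorem exists_mem_zeroDerivSubmodule_norm_le_one {X : Set ℂ} [CompactSpace X] {f : ℂ → ℂ}
    (hf : ∀ z ∈ X, HasDerivWithinAt f 0 X z) {z w : X} (hzw : f w ≠ f z) :
    ∃ h ∈ zeroDerivSubmodule X, ‖h‖ ≤ 1 ∧ ‖h w - h z‖ = 1 := by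
  set t : NNReal := ‖f w - f z‖₊⁻¹
  let φ : ℂ → ℂ := fun u => (min 1 (t * dist u (f z)) : ℝ)
  have hφ : LipschitzWith t φ := LipschitzWith.of_dist_le_mul fun u v => by
    rw [Complex.isometry_ofReal.dist_eq, Real.dist_eq]
    calc |min 1 (t * dist u (f z)) - min 1 (t * dist v (f z))|
        ≤ max |1 - 1| |t * dist u (f z) - t * dist v (f z)| := abs_min_sub_min_le_max _ _ _ _
      _ = t * |dist u (f z) - dist v (f z)| := by
        rw [sub_self, abs_zero, ← mul_sub, abs_mul, NNReal.abs_eq, max_eq_right (by positivity)]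
      _ ≤ t * dist u v := by gcongr; exact abs_dist_sub_le _ _ _
  have hfc : ContinuousOn f X := fun z hz => (hf z hz).continuousWithinAt
  let h : C(X, ℂ) := ⟨X.domRestrict (φ ∘ f), (hφ.continuous.comp_continuousOn hfc).domRestrict⟩
  have h_apply (x : X) : h x = φ (f x) := rfl
  refine ⟨h, ⟨φ ∘ f, fun _ => rfl, fun z hz => hφ.comp_hasDerivWithinAt_zero (hf z hz)⟩,
    (ContinuousMap.norm_le _ zero_le_one).2 fun x => ?_, ?_⟩
  · rw [h_apply, Complex.norm_real, Real.norm_eq_abs,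
      abs_of_nonneg (le_min zero_le_one (by positivity))]
    exact min_le_left _ _
  · have ht : (t : ℝ) * dist (f w) (f z) = 1 := by
      rw [NNReal.coe_inv, coe_nnnorm, dist_eq_norm,
        inv_mul_cancel₀ (norm_ne_zero_iff.2 (sub_ne_zero.2 hzw))]
    simp [h_apply, φ, ht]

/-- If `X` is a connected compact plane set for which `D¹(X)` is complete, then every
`f ∈ D¹(X)` with `f' = 0` on `X` is constant on `X`. -/
theorem stmt16 (X : Set ℂ) (hXc : IsCompact X) (hconn : IsConnected X)
    (hcomp : D1Complete X) (f f' : ℂ → ℂ) (hf : HasD1 X f f')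
    (hf' : ∀ z ∈ X, f' z = 0) :
    ∀ z ∈ X, ∀ w ∈ X, f z = f w := by
  have := isCompact_iff_compactSpace.mp hXc
  have hf0 (z : ℂ) (hz : z ∈ X) : HasDerivWithinAt f 0 X z := hf' z hz ▸ hf.1 z hz
  refine hconn.isPreconnected.apply_eq_of_eventually_eq fun z hz => ?_
  by_contra hlocal
  obtain ⟨A, hA⟩ := exists_norm_sub_le_of_mem_zeroDerivSubmodule hcomp ⟨z, hz⟩
  have hnear : ∀ᶠ w in 𝓝[X] z, w ∈ X ∧ A * ‖w - z‖ < 1 := by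
    refine eventually_mem_nhdsWithin.and (nhdsWithin_le_nhds ?_)
    have : Tendsto (fun w => A * ‖w - z‖) (𝓝 z) (𝓝 0) :=
      ((continuous_sub_right z).norm.const_mul A).tendsto' z 0 (by simp)
    exact this.eventually (gt_mem_nhds one_pos)
  obtain ⟨w, hfw, hwX, hwA⟩ := ((not_eventually.1 hlocal).and_eventually hnear).exists
  obtain ⟨h, hhZ, hh_le, hh_eq⟩ :=
    exists_mem_zeroDerivSubmodule_norm_le_one hf0 (z := ⟨z, hz⟩) (w := ⟨w, hwX⟩) hfw
  have hbound : 1 ≤ A * ‖h‖ * ‖w - z‖ := hh_eq ▸ hA h hhZ ⟨w, hwX⟩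
  have hpos : 0 < A * ‖w - z‖ := by nlinarith [norm_nonneg h]
  nlinarith [mul_le_mul_of_nonneg_left hh_le hpos.le]
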